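/- arXiv:0807.0155 — 4 statements merged into one kernel-verified Lean document; each statement's English description precedes it below -/
import Mathlib

section
/- Let α be a nonzero real number and let A_α be the 2×2 complex matrix [[1, α], [0, 1]]. Consider the quadruple of subspaces of V = ℂ² ⊕ ℂ² given by V₁ = ℂ² ⊕ 0, V₂ = 0 ⊕ ℂ², V₃ = {(x, x) : x ∈ ℂ²}, V₄ = {(x, A_α x) : x ∈ ℂ²}. Then this representation of the poset (1,1,1,1) (four pairwise incomparable elements) is indecomposable, but it is not a brick: there exists an endomorphism C : V → V with C(V_i) ⊆ V_i for i = 1,2,3,4 that is not a scalar multiple of the identity. -/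
/-!
The subspaces `V₁, V₂` force an endomorphism to be block diagonal, the diagonal `V₃` forces
the two blocks to agree, and the graph `V₄` forces the common block `B` to commute with `A_α`.
So the endomorphisms are exactly `B × B` with `B` in the commutant of `A_α`, which for `α ≠ 0`
is the local algebra `{a + b N}`, `N = [[0, 1], [0, 0]]`. Its only idempotents are `0` and `1`,
whereas a decomposition would yield a nontrivial idempotent endomorphism (the projection onto a
summand); hence the quadruple is indecomposable. On the other hand `N × N` is a non-scalar
endomorphism.
-/

noncomputable section

/-- A system of subspaces `A : ι → Submodule ℂ V` is decomposable if the ambient space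
splits as a direct sum of two nonzero subspaces compatible with every member of the system
(this is the internal reformulation of being isomorphic to a direct sum of two
representations with nonzero ambient spaces). -/
def IsDecomposableSystem {ι V : Type*} [AddCommGroup V] [Module ℂ V]
    (A : ι → Submodule ℂ V) : Prop :=
  ∃ U W : Submodule ℂ V, IsCompl U W ∧ U ≠ ⊥ ∧ W ≠ ⊥ ∧
    ∀ i, A i = A i ⊓ U ⊔ A i ⊓ W

/-- A system of subspaces is indecomposable if the ambient space is nonzero and the system
is not decomposable. -/
def IsIndecomposableSystem {ι V : Type*} [AddCommGroup V] [Module ℂ V]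
    (A : ι → Submodule ℂ V) : Prop :=
  (∃ v : V, v ≠ 0) ∧ ¬ IsDecomposableSystem A

/-- The matrix `A_α = [[1, α], [0, 1]]`. -/
def Amat (α : ℝ) : Matrix (Fin 2) (Fin 2) ℂ := !![1, (α : ℂ); 0, 1]

/-- The quadruple of subspaces of `V = ℂ² ⊕ ℂ²`:
`V₁ = ℂ² ⊕ 0`, `V₂ = 0 ⊕ ℂ²`, `V₃ = {(x, x)}`, `V₄ = {(x, A_α x)}`. -/
def rep0 (α : ℝ) : Fin 4 → Submodule ℂ ((Fin 2 → ℂ) × (Fin 2 → ℂ)) :=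
  ![Submodule.prod ⊤ ⊥,
    Submodule.prod ⊥ ⊤,
    LinearMap.graph (LinearMap.id : (Fin 2 → ℂ) →ₗ[ℂ] (Fin 2 → ℂ)),
    LinearMap.graph (Matrix.toLin' (Amat α))]

theorem Submodule.map_projection_le_of_eq_inf_sup_inf {R E : Type*} [Ring R] [AddCommGroup E]
    [Module R E] {U W A : Submodule R E} (hUW : IsCompl U W) (hA : A = A ⊓ U ⊔ A ⊓ W) :
    A.map (U.projection W hUW) ≤ A := by
  rintro _ ⟨v, hv, rfl⟩
  rw [hA] at hv
  obtain ⟨u, hu, w, hw, rfl⟩ := Submodule.mem_sup.mp hv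
  rw [map_add, Submodule.projection_apply_of_mem_left hUW hu.2,
    Submodule.projection_apply_of_mem_right hUW hw.2, add_zero]
  exact hu.1

theorem not_isDecomposableSystem_of_isIdempotentElem {ι V : Type*} [AddCommGroup V] [Module ℂ V]
    {A : ι → Submodule ℂ V}
    (h : ∀ P : V →ₗ[ℂ] V, IsIdempotentElem P → (∀ i, (A i).map P ≤ A i) →
      P = 0 ∨ P = 1) :
    ¬ IsDecomposableSystem A := by
  rintro ⟨U, W, hUW, hU, hW, hA⟩
  rcases h _ (Submodule.isIdempotentElem_projection hUW)
    (fun i => Submodule.map_projection_le_of_eq_inf_sup_inf hUW (hA i)) with h0 | h1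
  · exact hU (by rw [← Submodule.range_projection hUW, h0, LinearMap.range_zero])
  · exact hW (by rw [← Submodule.ker_projection hUW, h1, Module.End.one_eq_id, LinearMap.ker_id])

section graphSystem

variable {R M : Type*} [Ring R] [AddCommGroup M] [Module R M]

def graphSystem (T : Module.End R M) : Fin 4 → Submodule R (M × M) :=
  ![Submodule.prod ⊤ ⊥, Submodule.prod ⊥ ⊤, LinearMap.graph LinearMap.id, LinearMap.graph T]

theorem map_le_graphSystem_iff {T : Module.End R M} {C : Module.End R (M × M)} :
    (∀ i, (graphSystem T i).map C ≤ graphSystem T i) ↔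
      ∃ B : Module.End R M, Commute B T ∧ C = B.prodMap B := by
  constructor
  · intro hC
    have mem : ∀ i, ∀ v ∈ graphSystem T i, C v ∈ graphSystem T i :=
      fun i v hv => hC i (Submodule.mem_map_of_mem hv)
    have hinl : ∀ x, (C (x, 0)).2 = 0 := fun x => by
      simpa [graphSystem] using mem 0 (x, 0) (by simp [graphSystem])
    have hinr : ∀ y, (C (0, y)).1 = 0 := fun y => by
      simpa [graphSystem] using mem 1 (0, y) (by simp [graphSystem])
    have hsplit : ∀ x y, C (x, y) = C (x, 0) + C (0, y) := fun x y => by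
      rw [← map_add, Prod.mk_add_mk, add_zero, zero_add]
    have hdiag : ∀ y, (C (0, y)).2 = (C (y, 0)).1 := fun y => by
      have h := mem 2 (y, y) (by simp [graphSystem, LinearMap.mem_graph_iff])
      simpa [graphSystem, LinearMap.mem_graph_iff, hsplit y y, hinl, hinr] using h
    set B := LinearMap.fst R M M ∘ₗ C ∘ₗ LinearMap.inl R M M
    have hC : ∀ x y, C (x, y) = (B x, B y) := fun x y => by
      ext <;> simp [B, hsplit x y, hinl, hinr, hdiag]
    refine ⟨B, LinearMap.ext fun x => ?_, LinearMap.ext fun v => hC v.1 v.2⟩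
    have h := mem 3 (x, T x) (by simp [graphSystem, LinearMap.mem_graph_iff])
    simpa [graphSystem, LinearMap.mem_graph_iff, hC] using h
  · rintro ⟨B, hBT, rfl⟩ i _ ⟨v, hv, rfl⟩
    fin_cases i <;> simp_all [graphSystem, LinearMap.mem_graph_iff]
    exact LinearMap.congr_fun hBT.eq v.1

end graphSystem

theorem commute_Amat_iff {α : ℝ} (hα : α ≠ 0) {a b c d : ℂ} :
    Commute !![a, b; c, d] (Amat α) ↔ c = 0 ∧ d = a := by
  have hα' : (α : ℂ) ≠ 0 := Complex.ofReal_ne_zero.mpr hα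
  rw [Commute, SemiconjBy, Amat, Matrix.mul_fin_two, Matrix.mul_fin_two]
  simp only [EmbeddingLike.apply_eq_iff_eq, Matrix.vecCons_inj, and_true]
  constructor
  · rintro ⟨⟨e00, e01⟩, -, -⟩
    refine ⟨?_, mul_left_cancel₀ hα' (by linear_combination -e01)⟩
    exact (mul_eq_zero.1 (by linear_combination -e00 : (α : ℂ) * c = 0)).resolve_left hα'
  · rintro ⟨rfl, rfl⟩
    refine ⟨⟨?_, ?_⟩, ?_, ?_⟩ <;> ring

theorem Matrix.eq_zero_or_eq_one_of_isIdempotentElem_fin_two_toeplitz {K : Type*} [CommRing K]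
    [NoZeroDivisors K] {a b : K} (h : IsIdempotentElem !![a, b; 0, a]) :
    !![a, b; 0, a] = 0 ∨ !![a, b; 0, a] = 1 := by
  rw [IsIdempotentElem, Matrix.mul_fin_two] at h
  simp only [EmbeddingLike.apply_eq_iff_eq, Matrix.vecCons_inj, and_true] at h
  obtain ⟨⟨haa, hab⟩, -⟩ := h
  rcases IsIdempotentElem.iff_eq_zero_or_one.1 (show a * a = a by linear_combination haa)
    with rfl | rfl
  · obtain rfl : b = 0 := by linear_combination -hab
    exact Or.inl (Matrix.eta_fin_two 0).symm
  · obtain rfl : b = 0 := by linear_combination hab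
    exact Or.inr Matrix.one_fin_two.symm

theorem eq_zero_or_eq_one_of_commute_toLin'_Amat {α : ℝ} (hα : α ≠ 0)
    {B : Module.End ℂ (Fin 2 → ℂ)} (hBA : Commute B (Matrix.toLin' (Amat α)))
    (hB : IsIdempotentElem B) : B = 0 ∨ B = 1 := by
  obtain ⟨a, b, c, d, hM⟩ : ∃ a b c d, LinearMap.toMatrixAlgEquiv' B = !![a, b; c, d] :=
    ⟨_, _, _, _, Matrix.eta_fin_two _⟩
  have hMA := hBA.map LinearMap.toMatrixAlgEquiv'
  have hA : LinearMap.toMatrixAlgEquiv' (Matrix.toLin' (Amat α)) = Amat α :=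
    LinearMap.toMatrixAlgEquiv'_toLinAlgEquiv' _
  rw [hM, hA] at hMA
  obtain ⟨rfl, rfl⟩ := (commute_Amat_iff hα).1 hMA
  have hMM := hB.map LinearMap.toMatrixAlgEquiv'
  rw [hM] at hMM
  refine (Matrix.eq_zero_or_eq_one_of_isIdempotentElem_fin_two_toeplitz hMM).imp
    (fun h0 => ?_) (fun h1 => ?_)
  · exact LinearMap.toMatrixAlgEquiv'.injective (by rw [hM, h0, map_zero])
  · exact LinearMap.toMatrixAlgEquiv'.injective (by rw [hM, h1, map_one])

/-- The representation `(V; V₁, V₂, V₃, V₄)` of the poset `(1,1,1,1)` is indecomposable but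
is not a brick: it admits an endomorphism which is not a scalar multiple of the identity. -/
theorem rep0_indecomposable_not_brick (α : ℝ) (hα : α ≠ 0) :
    IsIndecomposableSystem (rep0 α) ∧
    ∃ C : ((Fin 2 → ℂ) × (Fin 2 → ℂ)) →ₗ[ℂ] ((Fin 2 → ℂ) × (Fin 2 → ℂ)),
      (∀ i, (rep0 α i).map C ≤ rep0 α i) ∧
      ∀ c : ℂ, C ≠ c • (LinearMap.id : ((Fin 2 → ℂ) × (Fin 2 → ℂ)) →ₗ[ℂ] _) := by
  rw [show rep0 α = graphSystem (Matrix.toLin' (Amat α)) from rfl]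
  refine ⟨⟨⟨(Pi.single 0 1, 0), by simp⟩, ?_⟩, ?_⟩
  · refine not_isDecomposableSystem_of_isIdempotentElem fun P hP hPA => ?_
    obtain ⟨B, hBA, rfl⟩ := map_le_graphSystem_iff.1 hPA
    have hB : IsIdempotentElem B :=
      LinearMap.ext fun x => congrArg Prod.fst (LinearMap.congr_fun hP (x, 0))
    rcases eq_zero_or_eq_one_of_commute_toLin'_Amat hα hBA hB with rfl | rfl
    · exact Or.inl LinearMap.prodMap_zero
    · exact Or.inr LinearMap.prodMap_one
  · let N : Matrix (Fin 2) (Fin 2) ℂ := !![0, 1; 0, 0]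
    have hNA : Commute (Matrix.toLin' N) (Matrix.toLin' (Amat α)) :=
      ((commute_Amat_iff hα).2 ⟨rfl, rfl⟩).map Matrix.toLinAlgEquiv'
    refine ⟨(Matrix.toLin' N).prodMap (Matrix.toLin' N),
      map_le_graphSystem_iff.2 ⟨_, hNA, rfl⟩, fun c h => ?_⟩
    have := congrFun (congrArg Prod.fst (LinearMap.congr_fun h (Pi.single 1 1, 0))) 0
    simp [N] at this
end
end

section
/- For λ ∈ ℂ \ {0, 1}, let π_λ be the representation of the poset (1,1,1,1) in V = ℂ² with basis e₁, e₂ given by the four lines V₁ = span{e₁}, V₂ = span{e₂}, V₃ = span{e₁ + e₂}, V₄ = span{e₁ + λ e₂}. Then each π_λ is indecomposable, and for λ ≠ μ (both in ℂ \ {0,1}) the representations π_λ and π_μ are not isomorphic; in particular the poset (1,1,1,1) has infinitely many pairwise non-isomorphic indecomposable representations. -/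
noncomputable section

/-- Two systems of subspaces are isomorphic if there is an invertible linear map carrying
each member of the first system onto the corresponding member of the second. -/
def RepIso {ι V W : Type*} [AddCommGroup V] [Module ℂ V] [AddCommGroup W] [Module ℂ W]
    (A : ι → Submodule ℂ V) (B : ι → Submodule ℂ W) : Prop :=
  ∃ C : V ≃ₗ[ℂ] W, ∀ i, (A i).map (C : V →ₗ[ℂ] W) = B i

/-- The representation `π_λ` of the poset `(1,1,1,1)` in `ℂ²`:
`V₁ = span{e₁}`, `V₂ = span{e₂}`, `V₃ = span{e₁+e₂}`, `V₄ = span{e₁+λe₂}`. -/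
def piRep (lam : ℂ) : Fin 4 → Submodule ℂ (Fin 2 → ℂ) :=
  ![Submodule.span ℂ {![1, 0]},
    Submodule.span ℂ {![0, 1]},
    Submodule.span ℂ {![1, 1]},
    Submodule.span ℂ {![1, lam]}]

/-! A decomposition `U ⊕ W` of `ℂ²` compatible with `π_λ` must put each of the lines through
`e₁`, `e₂`, `e₁ + e₂` inside `U` or inside `W`. Two of them land in the same summand, and any two
of these vectors span `ℂ²`, so the other summand is zero.

An isomorphism `π_λ ≅ π_μ` preserves the lines through `e₁` and `e₂`, hence is diagonal;
preserving the line through `e₁ + e₂` makes it a scalar, and a scalar maps the line through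
`e₁ + λe₂` to itself, so `λ = μ`. -/

theorem IsAtom.le_or_le_of_eq_inf_sup_inf {α : Type*} [Lattice α] [OrderBot α] {a u w : α}
    (ha : IsAtom a) (h : a = a ⊓ u ⊔ a ⊓ w) : a ≤ u ∨ a ≤ w := by
  rcases ha.le_iff.mp inf_le_left with hu | hu
  · rcases ha.le_iff.mp inf_le_left with hw | hw
    · exact absurd (by rw [h, hu, hw, bot_sup_eq]) ha.1
    · exact Or.inr (inf_eq_left.mp hw)
  · exact Or.inl (inf_eq_left.mp hu)

namespace Submodule

theorem mem_or_mem_of_span_singleton_eq_inf_sup_inf {K V : Type*} [DivisionRing K]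
    [AddCommGroup V] [Module K V] {v : V} {U W : Submodule K V}
    (h : K ∙ v = (K ∙ v) ⊓ U ⊔ (K ∙ v) ⊓ W) : v ∈ U ∨ v ∈ W := by
  rcases eq_or_ne v 0 with rfl | hv
  · exact Or.inl U.zero_mem
  · simpa only [span_singleton_le_iff_mem] using
      (nonzero_span_atom v hv).le_or_le_of_eq_inf_sup_inf h

theorem exists_unit_smul_eq_of_map_span_singleton_eq {R M N : Type*} [Ring R] [IsDomain R]
    [AddCommGroup M] [Module R M] [AddCommGroup N] [Module R N] [Module.IsTorsionFree R N]
    (f : M →ₗ[R] N) {v : M} {w : N} (h : (R ∙ v).map f = R ∙ w) :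
    ∃ z : Rˣ, z • w = f v :=
  span_singleton_eq_span_singleton.mp (by rw [← h, map_span, Set.image_singleton])

section Plane

variable {R : Type*} [Ring R] {U W : Submodule R (Fin 2 → R)}

theorem eq_top_of_mem_of_mem (h₁ : ![1, 0] ∈ U) (h₂ : ![0, 1] ∈ U) : U = ⊤ := by
  refine eq_top_iff.mpr fun x _ => ?_
  have hx : x = x 0 • ![1, 0] + x 1 • ![0, 1] := by
    ext i; fin_cases i <;> simp
  rw [hx]
  exact add_mem (smul_mem _ _ h₁) (smul_mem _ _ h₂)

theorem eq_top_or_eq_top_of_mem_or_mem (h₁ : ![1, 0] ∈ U ∨ ![1, 0] ∈ W)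
    (h₂ : ![0, 1] ∈ U ∨ ![0, 1] ∈ W) (h₃ : ![1, 1] ∈ U ∨ ![1, 1] ∈ W) : U = ⊤ ∨ W = ⊤ := by
  have e₁ : (![1, 1] - ![0, 1] : Fin 2 → R) = ![1, 0] := by ext i; fin_cases i <;> simp
  have e₂ : (![1, 1] - ![1, 0] : Fin 2 → R) = ![0, 1] := by ext i; fin_cases i <;> simp
  rcases h₁ with h₁ | h₁ <;> rcases h₂ with h₂ | h₂
  · exact Or.inl (eq_top_of_mem_of_mem h₁ h₂)
  · rcases h₃ with h₃ | h₃
    · exact Or.inl (eq_top_of_mem_of_mem h₁ (e₂ ▸ sub_mem h₃ h₁))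
    · exact Or.inr (eq_top_of_mem_of_mem (e₁ ▸ sub_mem h₃ h₂) h₂)
  · rcases h₃ with h₃ | h₃
    · exact Or.inl (eq_top_of_mem_of_mem (e₁ ▸ sub_mem h₃ h₂) h₂)
    · exact Or.inr (eq_top_of_mem_of_mem h₁ (e₂ ▸ sub_mem h₃ h₁))
  · exact Or.inr (eq_top_of_mem_of_mem h₁ h₂)

end Plane

end Submodule

open Submodule

theorem isIndecomposableSystem_of_three_lines {ι : Type*} (A : ι → Submodule ℂ (Fin 2 → ℂ))
    {i j k : ι} (hi : A i = ℂ ∙ ![1, 0]) (hj : A j = ℂ ∙ ![0, 1]) (hk : A k = ℂ ∙ ![1, 1]) :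
    IsIndecomposableSystem A := by
  refine ⟨⟨![1, 0], by simp⟩, ?_⟩
  rintro ⟨U, W, hUW, hU, hW, hA⟩
  have hmem : ∀ {l} {v : Fin 2 → ℂ}, A l = ℂ ∙ v → v ∈ U ∨ v ∈ W := fun hl =>
    mem_or_mem_of_span_singleton_eq_inf_sup_inf (hl ▸ hA _)
  rcases eq_top_or_eq_top_of_mem_or_mem (hmem hi) (hmem hj) (hmem hk) with rfl | rfl
  · exact hW (eq_bot_of_isCompl_top hUW.symm)
  · exact hU (eq_bot_of_isCompl_top hUW)

theorem piRep_isIndecomposableSystem (lam : ℂ) : IsIndecomposableSystem (piRep lam) :=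
  isIndecomposableSystem_of_three_lines (piRep lam) (i := 0) (j := 1) (k := 2) rfl rfl rfl

theorem eq_of_repIso_piRep {lam mu : ℂ} (h : RepIso (piRep lam) (piRep mu)) : lam = mu := by
  obtain ⟨C, hC⟩ := h
  obtain ⟨a, ha⟩ := exists_unit_smul_eq_of_map_span_singleton_eq _ (hC 0)
  obtain ⟨b, hb⟩ := exists_unit_smul_eq_of_map_span_singleton_eq _ (hC 1)
  obtain ⟨c, hc⟩ := exists_unit_smul_eq_of_map_span_singleton_eq _ (hC 2)
  obtain ⟨d, hd⟩ := exists_unit_smul_eq_of_map_span_singleton_eq _ (hC 3)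
  have h₃ : c • ![1, 1] = a • ![1, 0] + b • (![0, 1] : Fin 2 → ℂ) := by
    rw [ha, hb, hc, ← map_add]; congr; ext i; fin_cases i <;> simp
  have h₄ : d • ![1, mu] = a • ![1, 0] + lam • b • (![0, 1] : Fin 2 → ℂ) := by
    rw [ha, hb, hd, ← map_smul, ← map_add]; congr; ext i; fin_cases i <;> simp
  have hca : (c : ℂ) = a := by simpa [Units.smul_def] using congrFun h₃ 0
  have hcb : (c : ℂ) = b := by simpa [Units.smul_def] using congrFun h₃ 1
  have hda : (d : ℂ) = a := by simpa [Units.smul_def] using congrFun h₄ 0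
  have hdb : d * mu = lam * b := by simpa [Units.smul_def] using congrFun h₄ 1
  rw [hda, ← hcb, hca, mul_comm lam] at hdb
  exact (mul_left_cancel₀ a.ne_zero hdb).symm

/-- Each `π_λ` (λ ≠ 0, 1) is indecomposable, `π_λ ≇ π_μ` for `λ ≠ μ`, and in particular the
poset `(1,1,1,1)` has infinitely many pairwise non-isomorphic indecomposable
representations. -/
theorem fourSubspaces_infinite_family :
    (∀ lam : ℂ, lam ≠ 0 → lam ≠ 1 → IsIndecomposableSystem (piRep lam)) ∧
    (∀ lam mu : ℂ, lam ≠ 0 → lam ≠ 1 → mu ≠ 0 → mu ≠ 1 → lam ≠ mu →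
      ¬ RepIso (piRep lam) (piRep mu)) ∧
    (∃ f : ℕ → (Fin 4 → Submodule ℂ (Fin 2 → ℂ)),
      (∀ n, IsIndecomposableSystem (f n)) ∧
      ∀ n m, n ≠ m → ¬ RepIso (f n) (f m)) := by
  refine ⟨fun lam _ _ => piRep_isIndecomposableSystem lam,
    fun lam mu _ _ _ _ hne h => hne (eq_of_repIso_piRep h),
    -- `n + 2` keeps the parameter away from `0` and `1`
    fun n => piRep ((n : ℂ) + 2), fun n => piRep_isIndecomposableSystem _,
    fun n m hnm h => hnm ?_⟩
  exact_mod_cast add_right_cancel (eq_of_repIso_piRep h)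
end
end

section
/- Let α, β, δ, γ be positive real numbers. There exist rank-one orthogonal projections P, Q, R on ℂ² (with its standard inner product) such that the family {P, Q, R} is irreducible and α·P + β·Q + δ·R = γ·I, if and only if α < γ, β < γ, δ < γ, and α + β + δ = 2γ. (This describes all weights with which the unique indecomposable representation of the poset (1,1,1) with dimension vector (1;1;1;2) can be unitarized.) -/
/-!
Taking traces gives `α + β + δ = 2γ`, since rank-one projections have trace 1. If `γ ≤ α`,
pairing `αP + βQ + δR = γI` with a nonzero `v ∈ range P` gives `β‖Qv‖² + δ‖Rv‖² ≤ 0`, so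
`Qv = Rv = 0` and `ℂ ∙ v` is a common invariant line; likewise for `β` and `δ`.

Conversely, a real rank-one projection of `ℂ²` is `½ (I + c σ_z + s σ_x)` for a unit Bloch
vector `(c, s)`. The weighted sum is then `γ I` exactly when `α + β + δ = 2γ` and the three
Bloch vectors weighted by `α`, `β`, `δ` add up to zero, i.e. close up into a triangle with sides
`α`, `β`, `δ`, which exists by the strict triangle inequalities `α, β, δ < γ`. Two projections
whose Bloch vectors are neither equal nor antipodal already leave no line invariant.
-/

noncomputable section

/-- An orthogonal projection on `ℂⁿ` (with its standard inner product): a symmetric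
idempotent linear operator. -/
def IsOrthProj {n : ℕ}
    (p : EuclideanSpace ℂ (Fin n) →ₗ[ℂ] EuclideanSpace ℂ (Fin n)) : Prop :=
  p.IsSymmetric ∧ p ∘ₗ p = p

/-- For orthogonal projections, `p ≤ q` means `pq = qp = p`. -/
def ProjLE {n : ℕ}
    (p q : EuclideanSpace ℂ (Fin n) →ₗ[ℂ] EuclideanSpace ℂ (Fin n)) : Prop :=
  q ∘ₗ p = p ∧ p ∘ₗ q = p

/-- A family of operators on `ℂⁿ` is irreducible if the only subspaces invariant under
every member of the family are `{0}` and `ℂⁿ`. -/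
def IrreducibleFamily {n : ℕ}
    (T : Set (EuclideanSpace ℂ (Fin n) →ₗ[ℂ] EuclideanSpace ℂ (Fin n))) : Prop :=
  ∀ W : Submodule ℂ (EuclideanSpace ℂ (Fin n)),
    (∀ f ∈ T, W.map f ≤ W) → W = ⊥ ∨ W = ⊤

open scoped InnerProductSpace
open Module

theorem isOrthProj_iff_isSymmetricProjection {n : ℕ}
    {p : EuclideanSpace ℂ (Fin n) →ₗ[ℂ] EuclideanSpace ℂ (Fin n)} :
    IsOrthProj p ↔ p.IsSymmetricProjection := by
  rw [IsOrthProj, LinearMap.isSymmetricProjection_iff, IsIdempotentElem, Module.End.mul_eq_comp,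
    and_comm]

theorem IsOrthProj.trace_eq_finrank_range {n : ℕ}
    {p : EuclideanSpace ℂ (Fin n) →ₗ[ℂ] EuclideanSpace ℂ (Fin n)} (hp : IsOrthProj p) :
    LinearMap.trace ℂ _ p = finrank ℂ (LinearMap.range p) :=
  (LinearMap.IsIdempotentElem.isProj_range _
    (isOrthProj_iff_isSymmetricProjection.1 hp).isIdempotentElem).trace

theorem IrreducibleFamily.mono {n : ℕ}
    {S T : Set (EuclideanSpace ℂ (Fin n) →ₗ[ℂ] EuclideanSpace ℂ (Fin n))} (hST : S ⊆ T)
    (hS : IrreducibleFamily S) : IrreducibleFamily T :=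
  fun W hW => hS W fun f hf => hW f (hST hf)

theorem IrreducibleFamily.eq_zero_of_forall_apply_mem_span {n : ℕ} (hn : n ≠ 1)
    {T : Set (EuclideanSpace ℂ (Fin n) →ₗ[ℂ] EuclideanSpace ℂ (Fin n))} (hT : IrreducibleFamily T)
    {v : EuclideanSpace ℂ (Fin n)} (hv : ∀ f ∈ T, f v ∈ ℂ ∙ v) : v = 0 := by
  have hinv : ∀ f ∈ T, (ℂ ∙ v).map f ≤ ℂ ∙ v := fun f hf => by
    rw [Submodule.map_span_le]
    simpa using hv f hf
  by_contra hv0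
  rcases hT _ hinv with h | h
  · exact hv0 (Submodule.span_singleton_eq_bot.1 h)
  · have := finrank_span_singleton (K := ℂ) hv0
    rw [h, finrank_top, finrank_euclideanSpace_fin] at this
    exact hn this

section

variable {𝕜 E : Type*} [RCLike 𝕜] [NormedAddCommGroup E] [InnerProductSpace 𝕜 E]

theorem LinearMap.IsSymmetricProjection.re_inner_apply_self {T : E →ₗ[𝕜] E}
    (hT : T.IsSymmetricProjection) (v : E) : RCLike.re ⟪v, T v⟫_𝕜 = ‖T v‖ ^ 2 := by
  conv_lhs => rw [← hT.isIdempotentElem]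
  rw [Module.End.mul_apply, ← hT.isSymmetric]
  exact inner_self_eq_norm_sq _

theorem mem_of_starProjection_mem {a x : E} {W : Submodule 𝕜 E}
    (hW : ∀ y ∈ W, (𝕜 ∙ a).starProjection y ∈ W) (hx : x ∈ W) (hax : ⟪a, x⟫_𝕜 ≠ 0) : a ∈ W := by
  have ha : a ≠ 0 := by rintro rfl; simp at hax
  have hc : ⟪a, x⟫_𝕜 / ((‖a‖ ^ 2 : ℝ) : 𝕜) ≠ 0 := by simp [hax, ha]
  have := hW x hx
  rwa [Submodule.starProjection_singleton, W.smul_mem_iff hc] at this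

theorem eq_bot_or_eq_top_of_starProjection_mem {a b : E} (hab : ⟪a, b⟫_𝕜 ≠ 0)
    (hspan : Submodule.span 𝕜 {a, b} = ⊤) {W : Submodule 𝕜 E}
    (ha : ∀ y ∈ W, (𝕜 ∙ a).starProjection y ∈ W) (hb : ∀ y ∈ W, (𝕜 ∙ b).starProjection y ∈ W) :
    W = ⊥ ∨ W = ⊤ := by
  rcases eq_or_ne W ⊥ with hW | hW
  · exact .inl hW
  obtain ⟨v, hvW, hv0⟩ := W.ne_bot_iff.1 hW
  have hba : ⟪b, a⟫_𝕜 ≠ 0 := by rwa [← inner_conj_symm, map_ne_zero]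
  have hmem : a ∈ W ∧ b ∈ W := by
    by_cases hav : ⟪a, v⟫_𝕜 = 0
    · have hbv : ⟪b, v⟫_𝕜 ≠ 0 := by
        intro hbv
        obtain ⟨μ, ν, hv⟩ := Submodule.mem_span_pair.1 (hspan ▸ Submodule.mem_top : v ∈ _)
        refine hv0 (inner_self_eq_zero (𝕜 := 𝕜) |>.1 ?_)
        nth_rw 1 [← hv]
        simp [inner_add_left, inner_smul_left, hav, hbv]
      have hbW := mem_of_starProjection_mem hb hvW hbv
      exact ⟨mem_of_starProjection_mem ha hbW hab, hbW⟩
    · have haW := mem_of_starProjection_mem ha hvW hav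
      exact ⟨haW, mem_of_starProjection_mem hb haW hba⟩
  refine .inr (eq_top_iff.2 ?_)
  rw [← hspan, Submodule.span_le, Set.insert_subset_iff, Set.singleton_subset_iff]
  exact hmem

end

theorem apply_eq_zero_of_smul_add_smul_add_smul_eq {E : Type*} [NormedAddCommGroup E]
    [InnerProductSpace ℂ E] {P Q R : E →ₗ[ℂ] E} (hQ : Q.IsSymmetricProjection)
    (hR : R.IsSymmetricProjection) {α β δ γ : ℝ} (hβ : 0 < β) (hδ : 0 < δ) (hγα : γ ≤ α)
    (hsum : (α : ℂ) • P + (β : ℂ) • Q + (δ : ℂ) • R = (γ : ℂ) • LinearMap.id)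
    {v : E} (hv : P v = v) : Q v = 0 ∧ R v = 0 := by
  have hQv : (⟪v, Q v⟫_ℂ).re = ‖Q v‖ ^ 2 := hQ.re_inner_apply_self v
  have hRv : (⟪v, R v⟫_ℂ).re = ‖R v‖ ^ 2 := hR.re_inner_apply_self v
  have hvv : (⟪v, v⟫_ℂ).re = ‖v‖ ^ 2 := inner_self_eq_norm_sq (𝕜 := ℂ) v
  have hnorm : α * ‖v‖ ^ 2 + β * ‖Q v‖ ^ 2 + δ * ‖R v‖ ^ 2 = γ * ‖v‖ ^ 2 := by
    have := congrArg (fun f : E →ₗ[ℂ] E => (⟪v, f v⟫_ℂ).re) hsum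
    simpa only [LinearMap.add_apply, LinearMap.smul_apply, LinearMap.id_apply, hv,
      inner_add_right, inner_smul_right, Complex.add_re, Complex.re_ofReal_mul, hvv, hQv,
      hRv] using this
  have hγα' : 0 ≤ (α - γ) * ‖v‖ ^ 2 := mul_nonneg (sub_nonneg.2 hγα) (sq_nonneg _)
  have hQ0 : ‖Q v‖ ^ 2 = 0 := by nlinarith [sq_nonneg ‖Q v‖, sq_nonneg ‖R v‖]
  have hR0 : ‖R v‖ ^ 2 = 0 := by nlinarith [sq_nonneg ‖Q v‖, sq_nonneg ‖R v‖]
  simpa using And.intro hQ0 hR0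

theorem lt_of_irreducibleFamily {n : ℕ} (hn : n ≠ 1)
    {P Q R : EuclideanSpace ℂ (Fin n) →ₗ[ℂ] EuclideanSpace ℂ (Fin n)}
    (hP : IsOrthProj P) (hQ : IsOrthProj Q) (hR : IsOrthProj R) (hP0 : P ≠ 0)
    (hirr : IrreducibleFamily {P, Q, R}) {α β δ γ : ℝ} (hβ : 0 < β) (hδ : 0 < δ)
    (hsum : (α : ℂ) • P + (β : ℂ) • Q + (δ : ℂ) • R = (γ : ℂ) • LinearMap.id) : α < γ := by
  by_contra! hγα
  obtain ⟨w, hw⟩ : ∃ w, P w ≠ 0 := by simpa [LinearMap.ext_iff] using hP0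
  have hPv : P (P w) = P w := LinearMap.congr_fun hP.2 w
  obtain ⟨hQv, hRv⟩ := apply_eq_zero_of_smul_add_smul_add_smul_eq
    (isOrthProj_iff_isSymmetricProjection.1 hQ) (isOrthProj_iff_isSymmetricProjection.1 hR)
    hβ hδ hγα hsum hPv
  refine hw (hirr.eq_zero_of_forall_apply_mem_span hn ?_)
  rintro f (rfl | rfl | rfl)
  · rw [hPv]; exact Submodule.mem_span_singleton_self _
  · rw [hQv]; exact Submodule.zero_mem _
  · rw [hRv]; exact Submodule.zero_mem _

theorem exists_unit_vectors_of_triangle_ineq {α β δ : ℝ} (hα : 0 < α) (hβ : 0 < β) (hδ : 0 < δ)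
    (hα' : α < β + δ) (hβ' : β < α + δ) (hδ' : δ < α + β) :
    ∃ c₂ s₂ c₃ s₃ : ℝ, c₂ ^ 2 + s₂ ^ 2 = 1 ∧ c₃ ^ 2 + s₃ ^ 2 = 1 ∧ s₂ ≠ 0 ∧ s₃ ≠ 0 ∧
      α + β * c₂ + δ * c₃ = 0 ∧ β * s₂ + δ * s₃ = 0 := by
  -- the law of cosines in the triangle with sides `α`, `β`, `δ`
  set c₂ := (δ ^ 2 - α ^ 2 - β ^ 2) / (2 * α * β)
  set c₃ := (β ^ 2 - α ^ 2 - δ ^ 2) / (2 * α * δ)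
  have hc₂ : c₂ ^ 2 < 1 := by
    rw [sq_lt_one_iff_abs_lt_one, abs_lt, lt_div_iff₀ (by positivity), div_lt_iff₀ (by positivity)]
    constructor <;> nlinarith
  set s₂ := √(1 - c₂ ^ 2)
  have hs₂ : s₂ ^ 2 = 1 - c₂ ^ 2 := Real.sq_sqrt (by linarith)
  have hs₂0 : s₂ ≠ 0 := (Real.sqrt_pos.2 (by linarith)).ne'
  refine ⟨c₂, s₂, c₃, -(β * s₂ / δ), by linarith, ?_, hs₂0, by simp [hs₂0, hβ.ne', hδ.ne'], ?_, ?_⟩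
  · rw [neg_sq, div_pow (β * s₂), mul_pow β, hs₂]
    simp only [c₂, c₃]
    field_simp
    ring
  · simp only [c₂, c₃]
    field_simp
    ring
  · field_simp
    ring

theorem ne_neg_one_of_sq_add_sq_eq_one {c s : ℝ} (hcs : c ^ 2 + s ^ 2 = 1) (hs : s ≠ 0) :
    c ≠ -1 := by
  rintro rfl
  exact hs (pow_eq_zero_iff two_ne_zero |>.1 (by linarith))

def blochVec (c s : ℝ) : EuclideanSpace ℂ (Fin 2) := !₂[1 + c, s]

/-- For `c ^ 2 + s ^ 2 = 1` and `c ≠ -1` this has matrix `½ [[1 + c, s], [s, 1 - c]]`: it is the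
real rank-one projection with Bloch vector `(c, s)`. -/
def blochProj (c s : ℝ) : EuclideanSpace ℂ (Fin 2) →ₗ[ℂ] EuclideanSpace ℂ (Fin 2) :=
  (ℂ ∙ blochVec c s).starProjection

theorem inner_blochVec (c s : ℝ) (x : EuclideanSpace ℂ (Fin 2)) :
    ⟪blochVec c s, x⟫_ℂ = (1 + c) * x 0 + s * x 1 := by
  simp [blochVec, PiLp.inner_apply, Fin.sum_univ_two, mul_comm]

theorem one_add_ne_zero_of_ne_neg_one {c : ℝ} (hc : c ≠ -1) : (1 + c : ℂ) ≠ 0 := by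
  rw [add_comm, ← sub_neg_eq_add]
  exact_mod_cast sub_ne_zero.2 hc

theorem blochProj_apply {c s : ℝ} (hcs : c ^ 2 + s ^ 2 = 1) (hc : c ≠ -1)
    (x : EuclideanSpace ℂ (Fin 2)) :
    blochProj c s x = !₂[((1 + c) * x 0 + s * x 1) / 2, (s * x 0 + (1 - c) * x 1) / 2] := by
  have hcs' : (c : ℂ) ^ 2 + (s : ℂ) ^ 2 = 1 := by exact_mod_cast hcs
  have hnorm : (RCLike.ofReal (‖blochVec c s‖ ^ 2) : ℂ) = 2 * (1 + c) := by
    rw [RCLike.ofReal_pow, ← inner_self_eq_norm_sq_to_K, inner_blochVec]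
    simp only [blochVec, PiLp.toLp_apply, Matrix.cons_val_zero, Matrix.cons_val_one,
      Matrix.cons_val_fin_one]
    linear_combination hcs'
  have hc' := one_add_ne_zero_of_ne_neg_one hc
  rw [blochProj, ContinuousLinearMap.coe_coe, Submodule.starProjection_singleton, hnorm,
    inner_blochVec]
  ext i
  fin_cases i
  · simp [blochVec]; field_simp
  · simp [blochVec]; field_simp; linear_combination x 1 * hcs'

theorem isOrthProj_blochProj (c s : ℝ) : IsOrthProj (blochProj c s) :=
  isOrthProj_iff_isSymmetricProjection.2 (Submodule.isSymmetricProjection_starProjection _)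

theorem finrank_range_blochProj {c s : ℝ} (hc : c ≠ -1) :
    finrank ℂ (LinearMap.range (blochProj c s)) = 1 := by
  have hrange : LinearMap.range (blochProj c s) = ℂ ∙ blochVec c s :=
    Submodule.range_starProjection _
  rw [hrange]
  refine finrank_span_singleton fun h => one_add_ne_zero_of_ne_neg_one hc ?_
  simpa [blochVec] using congrArg (· 0) h

theorem span_blochVec_pair_eq_top {c s : ℝ} (hs : s ≠ 0) :
    Submodule.span ℂ {blochVec 1 0, blochVec c s} = ⊤ := by
  have hs' : (s : ℂ) ≠ 0 := by exact_mod_cast hs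
  refine Submodule.eq_top_iff'.2 fun x => Submodule.mem_span_pair.2
    ⟨(x 0 - (1 + c) * x 1 / s) / 2, x 1 / s, ?_⟩
  ext i
  fin_cases i <;> simp [blochVec] <;> field_simp
  ring

theorem irreducibleFamily_blochProj {c s : ℝ} (hcs : c ^ 2 + s ^ 2 = 1) (hs : s ≠ 0)
    (R : EuclideanSpace ℂ (Fin 2) →ₗ[ℂ] EuclideanSpace ℂ (Fin 2)) :
    IrreducibleFamily {blochProj 1 0, blochProj c s, R} := by
  refine IrreducibleFamily.mono (S := {blochProj 1 0, blochProj c s}) (by grind) fun W hW => ?_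
  have hab : ⟪blochVec 1 0, blochVec c s⟫_ℂ ≠ 0 := by
    have := one_add_ne_zero_of_ne_neg_one (ne_neg_one_of_sq_add_sq_eq_one hcs hs)
    rw [inner_blochVec]
    simpa [blochVec] using this
  exact eq_bot_or_eq_top_of_starProjection_mem hab (span_blochVec_pair_eq_top hs)
    (fun y hy => hW _ (Set.mem_insert _ _) (Submodule.mem_map_of_mem hy))
    (fun y hy => hW _ (Set.mem_insert_of_mem _ rfl) (Submodule.mem_map_of_mem hy))

theorem smul_blochProj_add_smul_blochProj_add_smul_blochProj {α β δ γ c₂ s₂ c₃ s₃ : ℝ}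
    (h₂ : c₂ ^ 2 + s₂ ^ 2 = 1) (h₃ : c₃ ^ 2 + s₃ ^ 2 = 1) (hc₂ : c₂ ≠ -1) (hc₃ : c₃ ≠ -1)
    (hcos : α + β * c₂ + δ * c₃ = 0) (hsin : β * s₂ + δ * s₃ = 0) (hsum : α + β + δ = 2 * γ) :
    (α : ℂ) • blochProj 1 0 + (β : ℂ) • blochProj c₂ s₂ + (δ : ℂ) • blochProj c₃ s₃ =
      (γ : ℂ) • LinearMap.id := by
  have hcos' : (α : ℂ) + β * c₂ + δ * c₃ = 0 := by exact_mod_cast hcos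
  have hsin' : (β : ℂ) * s₂ + δ * s₃ = 0 := by exact_mod_cast hsin
  have hsum' : (α : ℂ) + β + δ = 2 * γ := by exact_mod_cast hsum
  ext x i
  simp only [LinearMap.add_apply, LinearMap.smul_apply, LinearMap.id_apply,
    blochProj_apply (by norm_num : (1 : ℝ) ^ 2 + 0 ^ 2 = 1) (by norm_num), blochProj_apply h₂ hc₂,
    blochProj_apply h₃ hc₃]
  fin_cases i <;> simp
  · linear_combination (x 0 * (hsum' + hcos') + x 1 * hsin') / 2
  · linear_combination (x 0 * hsin' + x 1 * (hsum' - hcos')) / 2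

theorem exists_irreducible_rankOne_triple {α β δ γ : ℝ} (hα : 0 < α) (hβ : 0 < β) (hδ : 0 < δ)
    (hα' : α < β + δ) (hβ' : β < α + δ) (hδ' : δ < α + β) (hsum : α + β + δ = 2 * γ) :
    ∃ P Q R : EuclideanSpace ℂ (Fin 2) →ₗ[ℂ] EuclideanSpace ℂ (Fin 2),
      IsOrthProj P ∧ IsOrthProj Q ∧ IsOrthProj R ∧
      finrank ℂ (LinearMap.range P) = 1 ∧ finrank ℂ (LinearMap.range Q) = 1 ∧
      finrank ℂ (LinearMap.range R) = 1 ∧ IrreducibleFamily {P, Q, R} ∧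
      (α : ℂ) • P + (β : ℂ) • Q + (δ : ℂ) • R = (γ : ℂ) • LinearMap.id := by
  obtain ⟨c₂, s₂, c₃, s₃, h₂, h₃, hs₂, hs₃, hcos, hsin⟩ :=
    exists_unit_vectors_of_triangle_ineq hα hβ hδ hα' hβ' hδ'
  have hc₂ := ne_neg_one_of_sq_add_sq_eq_one h₂ hs₂
  have hc₃ := ne_neg_one_of_sq_add_sq_eq_one h₃ hs₃
  exact ⟨blochProj 1 0, blochProj c₂ s₂, blochProj c₃ s₃, isOrthProj_blochProj _ _,
    isOrthProj_blochProj _ _, isOrthProj_blochProj _ _, finrank_range_blochProj (by norm_num),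
    finrank_range_blochProj hc₂, finrank_range_blochProj hc₃,
    irreducibleFamily_blochProj h₂ hs₂ _,
    smul_blochProj_add_smul_blochProj_add_smul_blochProj h₂ h₃ hc₂ hc₃ hcos hsin hsum⟩

theorem add_add_eq_mul_of_finrank_range_eq_one {n : ℕ}
    {P Q R : EuclideanSpace ℂ (Fin n) →ₗ[ℂ] EuclideanSpace ℂ (Fin n)}
    (hP : IsOrthProj P) (hQ : IsOrthProj Q) (hR : IsOrthProj R)
    (rkP : finrank ℂ (LinearMap.range P) = 1) (rkQ : finrank ℂ (LinearMap.range Q) = 1)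
    (rkR : finrank ℂ (LinearMap.range R) = 1) {α β δ γ : ℝ}
    (hsum : (α : ℂ) • P + (β : ℂ) • Q + (δ : ℂ) • R = (γ : ℂ) • LinearMap.id) :
    α + β + δ = n * γ := by
  have htr := congrArg (LinearMap.trace ℂ _) hsum
  simp only [map_add, map_smul, LinearMap.trace_id, hP.trace_eq_finrank_range,
    hQ.trace_eq_finrank_range, hR.trace_eq_finrank_range, rkP, rkQ, rkR,
    finrank_euclideanSpace_fin, smul_eq_mul, Nat.cast_one, mul_one] at htr
  rw [mul_comm]
  exact_mod_cast htr

theorem unitarization_111_dim2_general (α β δ γ : ℝ)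
    (hα : 0 < α) (hβ : 0 < β) (hδ : 0 < δ) :
    (∃ P Q R : EuclideanSpace ℂ (Fin 2) →ₗ[ℂ] EuclideanSpace ℂ (Fin 2),
        IsOrthProj P ∧ IsOrthProj Q ∧ IsOrthProj R ∧
        Module.finrank ℂ (LinearMap.range P) = 1 ∧
        Module.finrank ℂ (LinearMap.range Q) = 1 ∧
        Module.finrank ℂ (LinearMap.range R) = 1 ∧
        IrreducibleFamily {P, Q, R} ∧
        (α : ℂ) • P + (β : ℂ) • Q + (δ : ℂ) • R
          = (γ : ℂ) • (LinearMap.id : EuclideanSpace ℂ (Fin 2) →ₗ[ℂ] _)) ↔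
      (α < γ ∧ β < γ ∧ δ < γ ∧ α + β + δ = 2 * γ) := by
  constructor
  · rintro ⟨P, Q, R, hP, hQ, hR, rkP, rkQ, rkR, hirr, hsum⟩
    have ne_zero (T : EuclideanSpace ℂ (Fin 2) →ₗ[ℂ] EuclideanSpace ℂ (Fin 2))
        (hT : finrank ℂ (LinearMap.range T) = 1) : T ≠ 0 := by
      rintro rfl
      rw [LinearMap.range_zero, finrank_bot] at hT
      exact zero_ne_one hT
    have h2 : (2 : ℕ) ≠ 1 := by norm_num
    refine ⟨lt_of_irreducibleFamily h2 hP hQ hR (ne_zero P rkP) hirr hβ hδ hsum,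
      lt_of_irreducibleFamily h2 hQ hP hR (ne_zero Q rkQ)
        (by rwa [Set.insert_comm]) hα hδ (by rw [← hsum]; module),
      lt_of_irreducibleFamily h2 hR hQ hP (ne_zero R rkR)
        (by rwa [Set.insert_comm, Set.pair_comm, Set.insert_comm]) hβ hα (by rw [← hsum]; module),
      by exact_mod_cast add_add_eq_mul_of_finrank_range_eq_one hP hQ hR rkP rkQ rkR hsum⟩
  · rintro ⟨hαγ, hβγ, hδγ, hsum⟩
    exact exists_irreducible_rankOne_triple hα hβ hδ (by linarith) (by linarith) (by linarith) hsum

/-- The weights with which the unique indecomposable representation of the poset `(1,1,1)`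
with dimension vector `(1;1;1;2)` can be unitarized: irreducible triples of rank-one
orthogonal projections on `ℂ²` with `αP + βQ + δR = γI` exist iff `α < γ`, `β < γ`,
`δ < γ`, `α + β + δ = 2γ`. -/
theorem unitarization_111_dim2 (α β δ γ : ℝ)
    (hα : 0 < α) (hβ : 0 < β) (hδ : 0 < δ) (hγ : 0 < γ) :
    (∃ P Q R : EuclideanSpace ℂ (Fin 2) →ₗ[ℂ] EuclideanSpace ℂ (Fin 2),
        IsOrthProj P ∧ IsOrthProj Q ∧ IsOrthProj R ∧
        Module.finrank ℂ (LinearMap.range P) = 1 ∧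
        Module.finrank ℂ (LinearMap.range Q) = 1 ∧
        Module.finrank ℂ (LinearMap.range R) = 1 ∧
        IrreducibleFamily {P, Q, R} ∧
        (α : ℂ) • P + (β : ℂ) • Q + (δ : ℂ) • R
          = (γ : ℂ) • (LinearMap.id : EuclideanSpace ℂ (Fin 2) →ₗ[ℂ] _)) ↔
      (α < γ ∧ β < γ ∧ δ < γ ∧ α + β + δ = 2 * γ) :=
  unitarization_111_dim2_general α β δ γ hα hβ hδ
end
end

section
/- Let α₁, α₂, β, δ, γ be positive real numbers. There exist rank-one orthogonal projections P₁, Q, R on ℂ² (with its standard inner product) such that the family {P₁, Q, R} is irreducible and α₁·P₁ + α₂·I + β·Q + δ·R = γ·I, if and only if α₁ + α₂ < γ, α₂ + β < γ, α₂ + δ < γ, and α₁ + 2α₂ + β + δ = 2γ. (This describes all weights with which the unique indecomposable representation of the primitive poset (2,1,1) with dimension vector (1,2;1;1;2) can be unitarized; here the second member P₂ of the chain has rank 2, i.e., P₂ = I.) -/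
noncomputable section

/-!
Taking traces gives `α₁ + 2α₂ + β + δ = 2γ`. Pairing `α₁P₁ + βQ + δR = (γ - α₂)I` with a
nonzero `u` in the range of `P₁` gives `(γ - α₂ - α₁)‖u‖² = β‖Qu‖² + δ‖Ru‖²`, which is
positive unless `Qu = Ru = 0`, and then the line `ℂu` would be invariant; by symmetry the same
holds for `Q` and `R`. Conversely, for `c = γ - α₂` the projections onto the lines through `e₁`,
`(√(c-α₁)√(c-β), √c√(c-δ))` and `(√(c-α₁)√(c-δ), -√c√(c-β))` satisfy the relation, and two
rank-one projections onto lines that are neither equal nor orthogonal already leave no line of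
`ℂ²` invariant.
-/

open scoped InnerProductSpace

local notation "ℂ^" n:max => EuclideanSpace ℂ (Fin n)

theorem IsOrthProj.inner_apply_self {n : ℕ} {P : ℂ^n →ₗ[ℂ] ℂ^n} (hP : IsOrthProj P)
    (u : ℂ^n) : ⟪u, P u⟫_ℂ = (‖P u‖ : ℂ) ^ 2 := by
  conv_lhs => rw [← hP.2, LinearMap.comp_apply, ← hP.1]
  exact inner_self_eq_norm_sq_to_K (P u)

theorem isOrthProj_iff_isSymmetricProjection_s10 {n : ℕ} {P : ℂ^n →ₗ[ℂ] ℂ^n} :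
    IsOrthProj P ↔ P.IsSymmetricProjection :=
  ⟨fun h => ⟨h.2, h.1⟩, fun h => ⟨h.2, h.1⟩⟩

theorem isOrthProj_starProjection {n : ℕ} (K : Submodule ℂ (ℂ^n)) :
    IsOrthProj (K.starProjection : ℂ^n →ₗ[ℂ] ℂ^n) :=
  isOrthProj_iff_isSymmetricProjection_s10.2 K.isSymmetricProjection_starProjection

theorem IsOrthProj.trace_eq_finrank_range_s10 {n : ℕ} {P : ℂ^n →ₗ[ℂ] ℂ^n} (hP : IsOrthProj P) :
    LinearMap.trace ℂ (ℂ^n) P = Module.finrank ℂ (LinearMap.range P) :=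
  ((LinearMap.isProj_range_iff_isIdempotentElem P).2 hP.2).trace

theorem finrank_range_starProjection_span_singleton {n : ℕ} {u : ℂ^n} (hu : u ≠ 0) :
    Module.finrank ℂ (LinearMap.range ((ℂ ∙ u).starProjection : ℂ^n →ₗ[ℂ] ℂ^n)) = 1 := by
  rw [Submodule.range_starProjection]
  exact finrank_span_singleton hu

theorem IrreducibleFamily.exists_apply_notMem_span_singleton {n : ℕ}
    {T : Set (ℂ^n →ₗ[ℂ] ℂ^n)} (hT : IrreducibleFamily T) (hn : 1 < n) {u : ℂ^n}
    (hu : u ≠ 0) : ∃ f ∈ T, f u ∉ ℂ ∙ u := by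
  by_contra! h
  have hinv : ∀ f ∈ T, (ℂ ∙ u).map f ≤ ℂ ∙ u := fun f hf => by
    rw [Submodule.map_le_iff_le_comap, Submodule.span_singleton_le_iff_mem]
    exact h f hf
  rcases hT _ hinv with hbot | htop
  · exact hu (Submodule.span_singleton_eq_bot.1 hbot)
  · have := finrank_span_singleton (K := ℂ) hu
    rw [htop, finrank_top, finrank_euclideanSpace_fin] at this
    omega

theorem lt_of_smul_add_smul_add_smul_eq_smul_id {n : ℕ} (hn : 1 < n)
    {A B C : ℂ^n →ₗ[ℂ] ℂ^n} (hA : IsOrthProj A) (hB : IsOrthProj B) (hC : IsOrthProj C)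
    (hA0 : A ≠ 0) (hirr : IrreducibleFamily {A, B, C}) {x y z w : ℝ} (hy : 0 < y) (hz : 0 < z)
    (heq : (x : ℂ) • A + (y : ℂ) • B + (z : ℂ) • C = (w : ℂ) • LinearMap.id) : x < w := by
  obtain ⟨u, hAu, hu⟩ : ∃ u, A u = u ∧ u ≠ 0 := by
    obtain ⟨v, hv⟩ : ∃ v, A v ≠ 0 := by
      by_contra! h
      exact hA0 (LinearMap.ext h)
    exact ⟨A v, LinearMap.congr_fun hA.2 v, hv⟩
  have hnorm : x * ‖u‖ ^ 2 + y * ‖B u‖ ^ 2 + z * ‖C u‖ ^ 2 = w * ‖u‖ ^ 2 := by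
    apply Complex.ofReal_injective
    have h := congrArg (fun T => ⟪u, T u⟫_ℂ) heq
    simp only [LinearMap.add_apply, LinearMap.smul_apply, LinearMap.id_apply, inner_add_right,
      inner_smul_right] at h
    rw [hA.inner_apply_self, hB.inner_apply_self, hC.inner_apply_self, hAu,
      inner_self_eq_norm_sq_to_K] at h
    push_cast
    exact h
  by_contra! hwx
  have hBu : B u = 0 := by
    have : ‖B u‖ ^ 2 = 0 := by nlinarith [sq_nonneg ‖B u‖, sq_nonneg ‖C u‖]
    simpa using this
  have hCu : C u = 0 := by
    have : ‖C u‖ ^ 2 = 0 := by nlinarith [sq_nonneg ‖B u‖, sq_nonneg ‖C u‖]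
    simpa using this
  obtain ⟨f, hf, hfu⟩ := hirr.exists_apply_notMem_span_singleton hn hu
  obtain rfl | rfl | rfl := hf
  · exact hfu (by rw [hAu]; exact Submodule.mem_span_singleton_self u)
  · exact hfu (hBu ▸ zero_mem _)
  · exact hfu (hCu ▸ zero_mem _)

theorem weights_lt_and_sum_eq_of_irreducible {P Q R : ℂ^2 →ₗ[ℂ] ℂ^2}
    (hP : IsOrthProj P) (hQ : IsOrthProj Q) (hR : IsOrthProj R)
    (hrP : Module.finrank ℂ (LinearMap.range P) = 1)
    (hrQ : Module.finrank ℂ (LinearMap.range Q) = 1)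
    (hrR : Module.finrank ℂ (LinearMap.range R) = 1)
    (hirr : IrreducibleFamily {P, Q, R}) {a b d c : ℝ} (ha : 0 < a) (hb : 0 < b) (hd : 0 < d)
    (heq : (a : ℂ) • P + (b : ℂ) • Q + (d : ℂ) • R = (c : ℂ) • LinearMap.id) :
    a < c ∧ b < c ∧ d < c ∧ a + b + d = 2 * c := by
  have hne : ∀ {S : ℂ^2 →ₗ[ℂ] ℂ^2}, Module.finrank ℂ (LinearMap.range S) = 1 → S ≠ 0 := by
    intro S hS h0
    rw [h0, LinearMap.range_zero, finrank_bot] at hS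
    exact zero_ne_one hS
  refine ⟨lt_of_smul_add_smul_add_smul_eq_smul_id one_lt_two hP hQ hR (hne hrP) hirr hb hd
      heq,
    lt_of_smul_add_smul_add_smul_eq_smul_id one_lt_two hQ hP hR (hne hrQ)
      (by rwa [Set.insert_comm Q P]) ha hd (by rw [← heq]; abel),
    lt_of_smul_add_smul_add_smul_eq_smul_id one_lt_two hR hP hQ (hne hrR)
      (by rwa [Set.insert_comm R P, Set.pair_comm R Q]) ha hb (by rw [← heq]; abel), ?_⟩
  have htr := congrArg (LinearMap.trace ℂ (ℂ^2)) heq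
  simp only [map_add, map_smul, LinearMap.trace_id, finrank_euclideanSpace_fin,
    hP.trace_eq_finrank_range_s10, hQ.trace_eq_finrank_range_s10, hR.trace_eq_finrank_range_s10,
    hrP, hrQ, hrR] at htr
  have : (a + b + d : ℂ) = 2 * c := by simpa [mul_comm] using htr
  exact_mod_cast this

theorem Submodule.mem_of_map_starProjection_span_singleton_le {𝕜 E : Type*} [RCLike 𝕜]
    [NormedAddCommGroup E] [InnerProductSpace 𝕜 E] {W : Submodule 𝕜 E} {u w : E}
    (hW : W.map ((𝕜 ∙ u).starProjection : E →ₗ[𝕜] E) ≤ W) (hw : w ∈ W) (huw : ⟪u, w⟫_𝕜 ≠ 0) :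
    u ∈ W := by
  have hu : u ≠ 0 := by
    rintro rfl
    exact huw (inner_zero_left w)
  have hmem : (⟪u, w⟫_𝕜 / ((‖u‖ ^ 2 : ℝ) : 𝕜)) • u ∈ W := by
    rw [← Submodule.starProjection_singleton]
    exact hW ⟨w, hw, rfl⟩
  refine (W.smul_mem_iff (div_ne_zero huw ?_)).1 hmem
  exact_mod_cast (pow_pos (norm_pos_iff.2 hu) 2).ne'

theorem irreducibleFamily_of_starProjection_mem {n : ℕ} {T : Set (ℂ^n →ₗ[ℂ] ℂ^n)}
    {e q : ℂ^n} (he : ((ℂ ∙ e).starProjection : ℂ^n →ₗ[ℂ] ℂ^n) ∈ T)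
    (hq : ((ℂ ∙ q).starProjection : ℂ^n →ₗ[ℂ] ℂ^n) ∈ T) (heq : ⟪e, q⟫_ℂ ≠ 0)
    (hspan : Submodule.span ℂ {e, q} = ⊤) : IrreducibleFamily T := by
  intro W hW
  refine or_iff_not_imp_left.2 fun hbot => ?_
  obtain ⟨w, hwW, hw0⟩ := W.ne_bot_iff.1 hbot
  have hmem : ∀ {u x}, ((ℂ ∙ u).starProjection : ℂ^n →ₗ[ℂ] ℂ^n) ∈ T → x ∈ W →
      ⟪u, x⟫_ℂ ≠ 0 → u ∈ W :=
    fun hu => Submodule.mem_of_map_starProjection_span_singleton_le (hW _ hu)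
  have heW_or_hqW : e ∈ W ∨ q ∈ W := by
    by_contra! h
    have hperp : Submodule.span ℂ {e, q} ≤ (ℂ ∙ w)ᗮ := by
      rw [Submodule.span_le]
      rintro u (rfl | rfl) <;>
        rw [SetLike.mem_coe, Submodule.mem_orthogonal_singleton_iff_inner_left]
      · exact not_not.1 fun h' => h.1 (hmem he hwW h')
      · exact not_not.1 fun h' => h.2 (hmem hq hwW h')
    have hww : w ∈ (ℂ ∙ w)ᗮ := hperp (hspan ▸ Submodule.mem_top)
    rw [Submodule.mem_orthogonal_singleton_iff_inner_left, inner_self_eq_zero] at hww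
    exact hw0 hww
  have heW : e ∈ W ∧ q ∈ W := by
    rcases heW_or_hqW with h | h
    · exact ⟨h, hmem hq h (by rwa [← inner_conj_symm, map_ne_zero])⟩
    · exact ⟨hmem he h heq, h⟩
  rw [eq_top_iff, ← hspan, Submodule.span_le]
  rintro x (rfl | rfl)
  exacts [heW.1, heW.2]

def realVec (x y : ℝ) : ℂ^2 := !₂[(x : ℂ), (y : ℂ)]

theorem inner_realVec_left (x y : ℝ) (v : ℂ^2) :
    ⟪realVec x y, v⟫_ℂ = x * v 0 + y * v 1 := by
  simp [realVec, PiLp.inner_apply, Fin.sum_univ_two, mul_comm]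

theorem norm_realVec_sq (x y : ℝ) : ‖realVec x y‖ ^ 2 = x ^ 2 + y ^ 2 := by
  simp [realVec, EuclideanSpace.norm_sq_eq, Fin.sum_univ_two]

theorem realVec_ne_zero_of_ne_zero_left {x : ℝ} (y : ℝ) (hx : x ≠ 0) : realVec x y ≠ 0 := by
  intro h
  simpa [realVec, hx] using congrArg (· 0) h

theorem starProjection_span_realVec_apply (x y : ℝ) (v : ℂ^2) :
    (ℂ ∙ realVec x y).starProjection v =
      ((x * v 0 + y * v 1) / (x ^ 2 + y ^ 2 : ℝ)) • realVec x y := by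
  rw [Submodule.starProjection_singleton, inner_realVec_left, norm_realVec_sq]
  rfl

theorem span_realVec_pair_eq_top {x y x' y' : ℝ} (h : x * y' - y * x' ≠ 0) :
    Submodule.span ℂ {realVec x y, realVec x' y'} = ⊤ := by
  set D : ℂ := x * y' - y * x' with hD
  have hDD : D * D⁻¹ = 1 := mul_inv_cancel₀ (by rw [hD]; exact_mod_cast h)
  refine Submodule.eq_top_iff'.2 fun v => Submodule.mem_span_pair.2
    ⟨(v 0 * y' - v 1 * x') * D⁻¹, (x * v 1 - y * v 0) * D⁻¹, ?_⟩
  ext i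
  fin_cases i <;> simp [realVec]
  · linear_combination v 0 * hDD + v 0 * D⁻¹ * hD
  · linear_combination v 1 * hDD + v 1 * D⁻¹ * hD

theorem smul_starProjection_realVec_add_eq_smul_id {a b d c sa sb sd s : ℝ} (ha : 0 < a)
    (hb : 0 < b) (hd : 0 < d) (hsa : sa ^ 2 = c - a) (hsb : sb ^ 2 = c - b) (hsd : sd ^ 2 = c - d)
    (hs : s ^ 2 = c) (hsum : a + b + d = 2 * c) :
    (a : ℂ) • ((ℂ ∙ realVec 1 0).starProjection : ℂ^2 →ₗ[ℂ] ℂ^2)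
      + (b : ℂ) • ((ℂ ∙ realVec (sa * sb) (s * sd)).starProjection : ℂ^2 →ₗ[ℂ] ℂ^2)
      + (d : ℂ) • ((ℂ ∙ realVec (sa * sd) (-(s * sb))).starProjection : ℂ^2 →ₗ[ℂ] ℂ^2)
      = (c : ℂ) • LinearMap.id := by
  have hq : (sa * sb) ^ 2 + (s * sd) ^ 2 = a * b := by
    linear_combination sb ^ 2 * hsa + (c - a) * hsb + sd ^ 2 * hs + c * hsd - c * hsum
  have hr : (sa * sd) ^ 2 + (-(s * sb)) ^ 2 = a * d := by
    linear_combination sd ^ 2 * hsa + (c - a) * hsd + sb ^ 2 * hs + c * hsb - c * hsum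
  have e0 : (a ^ 2 + (sa * sb) ^ 2 + (sa * sd) ^ 2 : ℂ) = a * c := by
    exact_mod_cast show a ^ 2 + (sa * sb) ^ 2 + (sa * sd) ^ 2 = a * c by
      linear_combination (sb ^ 2 + sd ^ 2) * hsa + (c - a) * hsb + (c - a) * hsd
        - (c - a) * hsum
  have e1 : ((s * sd) ^ 2 + (s * sb) ^ 2 : ℂ) = a * c := by
    exact_mod_cast show (s * sd) ^ 2 + (s * sb) ^ 2 = a * c by
      linear_combination (sd ^ 2 + sb ^ 2) * hs + c * hsd + c * hsb - c * hsum
  have ha' : (a : ℂ) ≠ 0 := by exact_mod_cast ha.ne'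
  have hb' : (b : ℂ) ≠ 0 := by exact_mod_cast hb.ne'
  have hd' : (d : ℂ) ≠ 0 := by exact_mod_cast hd.ne'
  ext v i
  simp only [LinearMap.add_apply, LinearMap.smul_apply, ContinuousLinearMap.coe_coe,
    starProjection_span_realVec_apply, hq, hr]
  fin_cases i <;> simp [realVec] <;> field_simp
  · linear_combination v 0 * e0
  · linear_combination v 1 * e1

theorem exists_irreducible_of_weights_lt_and_sum_eq {a b d c : ℝ} (ha : 0 < a) (hb : 0 < b)
    (hd : 0 < d) (hac : a < c) (hbc : b < c) (hdc : d < c) (hsum : a + b + d = 2 * c) :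
    ∃ P Q R : ℂ^2 →ₗ[ℂ] ℂ^2, IsOrthProj P ∧ IsOrthProj Q ∧ IsOrthProj R ∧
      Module.finrank ℂ (LinearMap.range P) = 1 ∧
      Module.finrank ℂ (LinearMap.range Q) = 1 ∧
      Module.finrank ℂ (LinearMap.range R) = 1 ∧
      IrreducibleFamily {P, Q, R} ∧
      (a : ℂ) • P + (b : ℂ) • Q + (d : ℂ) • R = (c : ℂ) • LinearMap.id := by
  have hsqrt : ∀ t : ℝ, 0 < t → ∃ r : ℝ, 0 < r ∧ r ^ 2 = t :=
    fun t ht => ⟨√t, Real.sqrt_pos.2 ht, Real.sq_sqrt ht.le⟩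
  obtain ⟨sa, hsa0, hsa⟩ := hsqrt (c - a) (by linarith)
  obtain ⟨sb, hsb0, hsb⟩ := hsqrt (c - b) (by linarith)
  obtain ⟨sd, hsd0, hsd⟩ := hsqrt (c - d) (by linarith)
  obtain ⟨s, hs0, hs⟩ := hsqrt c (by linarith)
  have hrank := fun {x : ℝ} (y : ℝ) (hx : x ≠ 0) =>
    finrank_range_starProjection_span_singleton (realVec_ne_zero_of_ne_zero_left y hx)
  refine ⟨_, _, _, isOrthProj_starProjection _, isOrthProj_starProjection _,
    isOrthProj_starProjection _, hrank _ one_ne_zero, hrank _ (by positivity),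
    hrank _ (by positivity), ?_,
    smul_starProjection_realVec_add_eq_smul_id ha hb hd hsa hsb hsd hs hsum⟩
  refine irreducibleFamily_of_starProjection_mem (e := realVec 1 0)
    (q := realVec (sa * sb) (s * sd)) (by simp) (by simp) ?_ (span_realVec_pair_eq_top ?_)
  · rw [inner_realVec_left]
    simp [realVec, hsa0.ne', hsb0.ne']
  · simp [hs0.ne', hsd0.ne']

theorem unitarization_211_dim2_general (α₁ α₂ β δ γ : ℝ)
    (hα₁ : 0 < α₁) (hβ : 0 < β) (hδ : 0 < δ) :
    (∃ P₁ Q R : EuclideanSpace ℂ (Fin 2) →ₗ[ℂ] EuclideanSpace ℂ (Fin 2),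
        IsOrthProj P₁ ∧ IsOrthProj Q ∧ IsOrthProj R ∧
        Module.finrank ℂ (LinearMap.range P₁) = 1 ∧
        Module.finrank ℂ (LinearMap.range Q) = 1 ∧
        Module.finrank ℂ (LinearMap.range R) = 1 ∧
        IrreducibleFamily {P₁, Q, R} ∧
        (α₁ : ℂ) • P₁ + (α₂ : ℂ) • (LinearMap.id : EuclideanSpace ℂ (Fin 2) →ₗ[ℂ] _)
            + (β : ℂ) • Q + (δ : ℂ) • R
          = (γ : ℂ) • (LinearMap.id : EuclideanSpace ℂ (Fin 2) →ₗ[ℂ] _)) ↔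
      (α₁ + α₂ < γ ∧ α₂ + β < γ ∧ α₂ + δ < γ ∧ α₁ + 2 * α₂ + β + δ = 2 * γ) := by
  have hshift : ∀ P Q R : ℂ^2 →ₗ[ℂ] ℂ^2,
      (α₁ : ℂ) • P + (α₂ : ℂ) • LinearMap.id + (β : ℂ) • Q + (δ : ℂ) • R
          = (γ : ℂ) • LinearMap.id ↔
        (α₁ : ℂ) • P + (β : ℂ) • Q + (δ : ℂ) • R = ((γ - α₂ : ℝ) : ℂ) • LinearMap.id := by
    intro P Q R
    rw [Complex.ofReal_sub, sub_smul, eq_sub_iff_add_eq]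
    constructor <;> intro h <;> rw [← h] <;> abel
  simp only [hshift]
  constructor
  · rintro ⟨P₁, Q, R, hP, hQ, hR, hrP, hrQ, hrR, hirr, heq⟩
    obtain ⟨h₁, h₂, h₃, h₄⟩ :=
      weights_lt_and_sum_eq_of_irreducible hP hQ hR hrP hrQ hrR hirr hα₁ hβ hδ heq
    exact ⟨by linarith, by linarith, by linarith, by linarith⟩
  · rintro ⟨h₁, h₂, h₃, h₄⟩
    exact exists_irreducible_of_weights_lt_and_sum_eq hα₁ hβ hδ (by linarith) (by linarith)
      (by linarith) (by linarith)

/-- The weights with which the unique indecomposable representation of the primitive poset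
`(2,1,1)` with dimension vector `(1,2;1;1;2)` can be unitarized (the second chain member
`P₂` has rank 2, i.e. `P₂ = I`): irreducible systems with
`α₁P₁ + α₂I + βQ + δR = γI` exist iff `α₁+α₂ < γ`, `α₂+β < γ`, `α₂+δ < γ`,
`α₁+2α₂+β+δ = 2γ`. -/
theorem unitarization_211_dim2 (α₁ α₂ β δ γ : ℝ)
    (hα₁ : 0 < α₁) (hα₂ : 0 < α₂) (hβ : 0 < β) (hδ : 0 < δ) (hγ : 0 < γ) :
    (∃ P₁ Q R : EuclideanSpace ℂ (Fin 2) →ₗ[ℂ] EuclideanSpace ℂ (Fin 2),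
        IsOrthProj P₁ ∧ IsOrthProj Q ∧ IsOrthProj R ∧
        Module.finrank ℂ (LinearMap.range P₁) = 1 ∧
        Module.finrank ℂ (LinearMap.range Q) = 1 ∧
        Module.finrank ℂ (LinearMap.range R) = 1 ∧
        IrreducibleFamily {P₁, Q, R} ∧
        (α₁ : ℂ) • P₁ + (α₂ : ℂ) • (LinearMap.id : EuclideanSpace ℂ (Fin 2) →ₗ[ℂ] _)
            + (β : ℂ) • Q + (δ : ℂ) • R
          = (γ : ℂ) • (LinearMap.id : EuclideanSpace ℂ (Fin 2) →ₗ[ℂ] _)) ↔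
      (α₁ + α₂ < γ ∧ α₂ + β < γ ∧ α₂ + δ < γ ∧ α₁ + 2 * α₂ + β + δ = 2 * γ) :=
  unitarization_211_dim2_general α₁ α₂ β δ γ hα₁ hβ hδ
end
end
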